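/- arXiv:2110.10881 — 2 statements merged into one kernel-verified Lean document; each statement's English description precedes it below -/
import Mathlib

section
/- Define G₀(z) = max(0, min(1, 2z - 1/2)) and Υ(z) = ∫₀ᶻ G₀(x) dx. Then for all z ∈ [0,1], z·Υ(1-z) + (1-z)·Υ(z) ≤ 1/16, with equality if and only if z ∈ [1/4, 3/4]. -/
open MeasureTheory Set

/-- The cdf of the uniform distribution on `[1/4, 3/4]`. -/
noncomputable def G₀ (x : ℝ) : ℝ := max 0 (min 1 (2 * x - 1/2))

/-- `Υ(z) = ∫₀ᶻ G₀(x) dx`. -/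
noncomputable def Υ (z : ℝ) : ℝ := ∫ x in (0:ℝ)..z, G₀ x

/-!
Integrating the piecewise linear `G₀` gives `Υ` explicitly: `0` on `(-∞, 1/4]`, `(z - 1/4)²` on
`[1/4, 3/4]` and `z - 1/2` on `[3/4, ∞)`. Substituting, `z·Υ(1-z) + (1-z)·Υ(z)` equals
`1/16 - d²` for every real `z`, where `d` is the distance from `z` to `[1/4, 3/4]`.
-/

theorem continuous_G₀ : Continuous G₀ := by
  unfold G₀; fun_prop

theorem G₀_eq_zero {x : ℝ} (hx : x ≤ 1/4) : G₀ x = 0 := by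
  unfold G₀; rw [min_eq_right (by linarith), max_eq_left (by linarith)]

theorem G₀_eq_of_mem_Icc {x : ℝ} (hx : x ∈ Icc (1/4 : ℝ) (3/4)) : G₀ x = 2 * x - 1/2 := by
  unfold G₀; rw [min_eq_right (by linarith [hx.2]), max_eq_right (by linarith [hx.1])]

theorem G₀_eq_one {x : ℝ} (hx : 3/4 ≤ x) : G₀ x = 1 := by
  unfold G₀; rw [min_eq_left (by linarith), max_eq_right (by linarith)]

theorem Υ_add_integral (a b : ℝ) : Υ a + ∫ x in a..b, G₀ x = Υ b :=
  intervalIntegral.integral_add_adjacent_intervals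
    (continuous_G₀.intervalIntegrable _ _) (continuous_G₀.intervalIntegrable _ _)

theorem Υ_eq_zero {z : ℝ} (hz : z ≤ 1/4) : Υ z = 0 := by
  have hsub : uIcc 0 z ⊆ Iic (1/4 : ℝ) := fun _ hx =>
    hx.2.trans (max_le (by norm_num) hz)
  rw [Υ, intervalIntegral.integral_congr (g := fun _ => 0) fun x hx => G₀_eq_zero (hsub hx)]
  simp

theorem Υ_eq_sq {z : ℝ} (hz : z ∈ Icc (1/4 : ℝ) (3/4)) : Υ z = (z - 1/4) ^ 2 := by
  have hsub : uIcc (1/4) z ⊆ Icc (1/4 : ℝ) (3/4) := uIcc_subset_Icc (by norm_num) hz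
  rw [← Υ_add_integral (1/4), Υ_eq_zero le_rfl, zero_add,
    intervalIntegral.integral_congr fun x hx => G₀_eq_of_mem_Icc (hsub hx),
    intervalIntegral.integral_sub
    ((continuous_const_mul 2).intervalIntegrable _ _) intervalIntegrable_const,
    intervalIntegral.integral_const_mul, integral_id, intervalIntegral.integral_const]
  simp only [smul_eq_mul]
  ring

theorem Υ_eq_sub {z : ℝ} (hz : 3/4 ≤ z) : Υ z = z - 1/2 := by
  rw [← Υ_add_integral (3/4), Υ_eq_sq ⟨by norm_num, le_rfl⟩,
    intervalIntegral.integral_congr (g := fun _ => 1) fun x hx => G₀_eq_one ?_]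
  · simp only [intervalIntegral.integral_const, smul_eq_mul, mul_one]; ring
  · rw [uIcc_of_le hz] at hx; exact hx.1

theorem weighted_sum_Υ_eq_of_le {z : ℝ} (hz : z ≤ 1/4) :
    z * Υ (1 - z) + (1 - z) * Υ z = 1/16 - (1/4 - z) ^ 2 := by
  rw [Υ_eq_zero hz, Υ_eq_sub (by linarith)]; ring

theorem weighted_sum_Υ_eq_of_mem_Icc {z : ℝ} (hz : z ∈ Icc (1/4 : ℝ) (3/4)) :
    z * Υ (1 - z) + (1 - z) * Υ z = 1/16 := by
  rw [Υ_eq_sq hz, Υ_eq_sq ⟨by linarith [hz.2], by linarith [hz.1]⟩]; ring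

theorem weighted_sum_Υ_eq_of_ge {z : ℝ} (hz : 3/4 ≤ z) :
    z * Υ (1 - z) + (1 - z) * Υ z = 1/16 - (z - 3/4) ^ 2 := by
  rw [Υ_eq_sub hz, Υ_eq_zero (by linarith)]; ring

/-- For all `z ∈ [0,1]`, `z·Υ(1-z) + (1-z)·Υ(z) ≤ 1/16`,
with equality if and only if `z ∈ [1/4, 3/4]`. -/
theorem stmt_4 : ∀ z ∈ Icc (0:ℝ) 1,
    z * Υ (1 - z) + (1 - z) * Υ z ≤ 1/16 ∧
    (z * Υ (1 - z) + (1 - z) * Υ z = 1/16 ↔ z ∈ Icc (1/4 : ℝ) (3/4)) := by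
  intro z _
  by_cases hmem : z ∈ Icc (1/4 : ℝ) (3/4)
  · rw [weighted_sum_Υ_eq_of_mem_Icc hmem]
    exact ⟨le_rfl, iff_of_true rfl hmem⟩
  have hlt : z * Υ (1 - z) + (1 - z) * Υ z < 1/16 := by
    rcases not_and_or.1 hmem with hlow | hhigh
    · rw [weighted_sum_Υ_eq_of_le (not_le.1 hlow).le]
      linarith [pow_pos (sub_pos.2 (not_le.1 hlow)) 2]
    · rw [weighted_sum_Υ_eq_of_ge (not_le.1 hhigh).le]
      linarith [pow_pos (sub_pos.2 (not_le.1 hhigh)) 2]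
  exact ⟨hlt.le, iff_of_false hlt.ne hmem⟩
end

section
/- Let G and G₀ be cdfs of probability distributions on [0,1] with G₀(x) = max(0, min(1, 2x - 1/2)), and suppose there exists z ∈ (0,1) and ε > 0 with |G(z) - G₀(z)| ≥ ε. Let H(x) = G₀(x) - G(x). Then ∫₀¹ H(x)² dx ≥ ε³/6. -/
/-!
Where `G` exceeds `G₀` by `ε` at `z`, monotonicity of `G` and the `2`-Lipschitz bound on `G₀`
keep `G - G₀` above the tent `ε - 2 (x - z)` on `[z, z + ε/2]`, which lies in `[0, 1]` because
`G ≤ 1`; the squared tent integrates to `ε³/6`. The case `G < G₀` is the same after the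
reflection `G ↦ 1 - G (1 - ·)`, which preserves the hypotheses since `G₀ (1 - x) = 1 - G₀ x`.
-/

open MeasureTheory Set

open scoped NNReal

theorem lipschitzWith_G₀ : LipschitzWith 2 G₀ := by
  have h : LipschitzWith 2 fun x : ℝ => 2 * x - 1/2 := LipschitzWith.of_dist_le_mul fun x y => by
    rw [Real.dist_eq, Real.dist_eq, sub_sub_sub_cancel_right, ← mul_sub, abs_mul]
    norm_num
  exact (h.const_min 1).const_max 0

theorem G₀_mem_Icc (x : ℝ) : G₀ x ∈ Icc (0 : ℝ) 1 :=
  ⟨le_max_left _ _, max_le zero_le_one (min_le_left _ _)⟩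

theorem G₀_one_sub (x : ℝ) : G₀ (1 - x) = 1 - G₀ x := by
  simp only [G₀, max_def, min_def]
  split_ifs <;> linarith

theorem add_half_le_of_G₀_add_le {z δ : ℝ} (hδ : 0 < δ) (h : G₀ z + δ ≤ 1) :
    z + δ / 2 ≤ 3 / 4 := by
  simp only [G₀, max_def, min_def] at h
  split_ifs at h <;> linarith

theorem intervalIntegral.integral_sq_tent (c ε : ℝ) {K : ℝ} (hK : K ≠ 0) :
    ∫ x in c..c + ε / K, (ε - K * (x - c)) ^ 2 = ε ^ 3 / (3 * K) := by
  rw [intervalIntegral.integral_comp_sub_right (fun x => (ε - K * x) ^ 2) c,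
    intervalIntegral.integral_comp_sub_mul (fun x => x ^ 2) hK, integral_pow, smul_eq_mul]
  field_simp
  ring

theorem MonotoneOn.intervalIntegrable_sq_sub {g G : ℝ → ℝ} {a b C : ℝ} (hab : a ≤ b)
    (hG : MonotoneOn G (Icc a b)) (hg : Continuous g) (hC : ∀ x ∈ Icc a b, |g x - G x| ≤ C) :
    IntervalIntegrable (fun x => (g x - G x) ^ 2) volume a b := by
  have hdiff : IntervalIntegrable (fun x => g x - G x) volume a b :=
    (hg.intervalIntegrable a b).sub
      (by rwa [uIcc_of_le hab] : MonotoneOn G (uIcc a b)).intervalIntegrable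
  rw [intervalIntegrable_iff_integrableOn_Ioc_of_le hab] at hdiff ⊢
  simp_rw [sq]
  refine hdiff.mul_bdd (c := C) hdiff.aestronglyMeasurable ?_
  filter_upwards [ae_restrict_mem measurableSet_Ioc] with x hx
  exact hC x (Ioc_subset_Icc_self hx)

theorem le_integral_sq_sub_of_lipschitzWith_of_monotoneOn {g G : ℝ → ℝ} {K : ℝ≥0}
    {a b z ε : ℝ} (hK : 0 < K) (hg : LipschitzWith K g) (hG : MonotoneOn G (Icc a b))
    (hint : IntervalIntegrable (fun x => (g x - G x) ^ 2) volume a b)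
    (haz : a ≤ z) (hzb : z + ε / K ≤ b) (hε : 0 ≤ ε) (hgap : ε ≤ G z - g z) :
    ε ^ 3 / (3 * K) ≤ ∫ x in a..b, (g x - G x) ^ 2 := by
  have hK' : (0 : ℝ) < K := hK
  have hzz : z ≤ z + ε / K := le_add_of_nonneg_right (by positivity)
  have hsub : Icc z (z + ε / K) ⊆ Icc a b := Icc_subset_Icc haz hzb
  have hpt : ∀ x ∈ Icc z (z + ε / K), (ε - K * (x - z)) ^ 2 ≤ (g x - G x) ^ 2 := by
    intro x hx
    have hGx : G z ≤ G x := hG (hsub (left_mem_Icc.2 hzz)) (hsub hx) hx.1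
    have hgx : g x - g z ≤ K * (x - z) := by
      simpa [Real.dist_eq, abs_of_nonneg (sub_nonneg.2 hx.1)] using
        (le_abs_self _).trans (hg.dist_le_mul x z)
    have htent : 0 ≤ ε - K * (x - z) := by
      have := (le_div_iff₀' hK').1 (sub_le_iff_le_add'.2 hx.2)
      linarith
    rw [← neg_sub (G x), neg_sq]
    exact pow_le_pow_left₀ htent (by linarith) 2
  calc ε ^ 3 / (3 * K) = ∫ x in z..z + ε / K, (ε - K * (x - z)) ^ 2 :=
        (intervalIntegral.integral_sq_tent z ε hK'.ne').symm
    _ ≤ ∫ x in z..z + ε / K, (g x - G x) ^ 2 :=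
        intervalIntegral.integral_mono_on hzz
          ((by fun_prop : Continuous fun x => (ε - K * (x - z)) ^ 2).intervalIntegrable _ _)
          (hint.mono_set (by simpa [uIcc_of_le hzz, uIcc_of_le (haz.trans (hzz.trans hzb))]))
          hpt
    _ ≤ ∫ x in a..b, (g x - G x) ^ 2 :=
        intervalIntegral.integral_mono_interval haz hzz hzb
          (Filter.Eventually.of_forall fun _ => sq_nonneg _) hint

theorem le_integral_sq_G₀_sub {G : ℝ → ℝ} (hmono : MonotoneOn G (Icc 0 1))
    (hrange : ∀ x ∈ Icc (0 : ℝ) 1, G x ∈ Icc (0 : ℝ) 1) {z ε : ℝ}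
    (hz : z ∈ Icc (0 : ℝ) 1) (hε : 0 < ε) (hgap : ε ≤ G z - G₀ z) :
    ε ^ 3 / 6 ≤ ∫ x in (0 : ℝ)..1, (G₀ x - G x) ^ 2 := by
  have hzb : z + ε / 2 ≤ 3 / 4 :=
    add_half_le_of_G₀_add_le hε (by linarith [(hrange z hz).2])
  have hint : IntervalIntegrable (fun x => (G₀ x - G x) ^ 2) volume 0 1 :=
    hmono.intervalIntegrable_sq_sub zero_le_one lipschitzWith_G₀.continuous fun x hx =>
      abs_sub_le_of_nonneg_of_le (G₀_mem_Icc x).1 (G₀_mem_Icc x).2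
        (hrange x hx).1 (hrange x hx).2
  have := le_integral_sq_sub_of_lipschitzWith_of_monotoneOn two_pos lipschitzWith_G₀ hmono hint
    hz.1 (by push_cast; linarith) hε.le hgap
  norm_num at this ⊢
  exact this

theorem integral_sq_G₀_sub_reflect (G : ℝ → ℝ) :
    ∫ x in (0 : ℝ)..1, (G₀ x - (1 - G (1 - x))) ^ 2 =
      ∫ x in (0 : ℝ)..1, (G₀ x - G x) ^ 2 := by
  have h : ∀ x, (G₀ x - (1 - G (1 - x))) ^ 2 = (G₀ (1 - x) - G (1 - x)) ^ 2 := fun x => by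
    rw [G₀_one_sub]; ring
  simp_rw [h]
  rw [intervalIntegral.integral_comp_sub_left (fun y => (G₀ y - G y) ^ 2)]
  norm_num

/-- If a nondecreasing `G : [0,1] → [0,1]` differs from `G₀` by at least `ε` at some
point `z ∈ (0,1)`, then `∫₀¹ (G₀(x) - G(x))² dx ≥ ε³/6`. -/
theorem stmt_7 (G : ℝ → ℝ) (hmono : MonotoneOn G (Icc (0:ℝ) 1))
    (hrange : ∀ x ∈ Icc (0:ℝ) 1, G x ∈ Icc (0:ℝ) 1)
    (z : ℝ) (hz : z ∈ Ioo (0:ℝ) 1) (ε : ℝ) (hε : 0 < ε)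
    (hdiff : ε ≤ |G z - G₀ z|) :
    ε^3 / 6 ≤ ∫ x in (0:ℝ)..1, (G₀ x - G x)^2 := by
  have hz' : z ∈ Icc (0 : ℝ) 1 := Ioo_subset_Icc_self hz
  rcases le_abs'.mp hdiff with hbelow | habove
  · rw [← integral_sq_G₀_sub_reflect]
    refine le_integral_sq_G₀_sub (z := 1 - z)
      (fun x hx y hy hxy =>
        sub_le_sub_left (hmono (Icc.one_sub_mem hy) (Icc.one_sub_mem hx) (by linarith)) 1)
      (fun x hx => Icc.one_sub_mem (hrange _ (Icc.one_sub_mem hx))) (Icc.one_sub_mem hz') hε ?_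
    rw [G₀_one_sub, sub_sub_cancel]
    linarith
  · exact le_integral_sq_G₀_sub hmono hrange hz' hε habove
end
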